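/- Let f : R^d → R be L-smooth and μ-strongly quasi-convex with unique minimizer x* and μ > 0. Then for the average f = (1/n)∑ᵢ fᵢ of possibly non-convex L-smooth functions fᵢ, one has for every x: (1/n)∑ᵢ ‖∇fᵢ(x)‖² ≤ 4(L²/μ)(f(x) − f(x*)) + (2/n)∑ᵢ ‖∇fᵢ(x*)‖². -/

import Mathlib

open scoped RealInnerProductSpace
open Set Filter Topology

/-!
Restricted to the segment from `x*` to `x`, strong quasi-convexity says that
`ψ(t) = f(x* + t (x - x*))` satisfies `t ψ'(t) ≥ ψ(t) - ψ(0) + c t²` with `c = μ/2 ‖x - x*‖²`,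
so `(ψ(t) - ψ(0)) / t - c t` is nondecreasing on `(0, 1]`. Since `x*` minimizes `f`, this quantity
is at least `-c t`, and letting `t → 0⁺` gives quadratic growth `f(x) - f(x*) ≥ μ/2 ‖x - x*‖²`.
Combined with `‖∇fᵢ(x)‖² ≤ 2 ‖∇fᵢ(x) - ∇fᵢ(x*)‖² + 2 ‖∇fᵢ(x*)‖² ≤ 2 L² ‖x - x*‖² + 2 ‖∇fᵢ(x*)‖²`
and averaged over `i`, this is the bound.
-/

theorem le_sub_of_sub_mul_deriv_add_sq_le {ψ ψ' : ℝ → ℝ} {c : ℝ}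
    (hψ : ∀ t ∈ Ioc (0 : ℝ) 1, HasDerivAt ψ (ψ' t) t)
    (hmin : ∀ t ∈ Ioo (0 : ℝ) 1, ψ 0 ≤ ψ t)
    (hqsc : ∀ t ∈ Ioo (0 : ℝ) 1, ψ t - t * ψ' t + c * t ^ 2 ≤ ψ 0) :
    c ≤ ψ 1 - ψ 0 := by
  set A : ℝ → ℝ := fun t => (ψ t - ψ 0) / t - c * t with hA
  have hA' : ∀ t ∈ Ioc (0 : ℝ) 1,
      HasDerivAt A ((ψ' t * t - (ψ t - ψ 0) * 1) / t ^ 2 - c) t := fun t ht =>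
    (((hψ t ht).sub_const (ψ 0)).div (hasDerivAt_id t) ht.1.ne').sub
      ((hasDerivAt_id t).const_mul c |>.congr_deriv (mul_one c))
  have hmono : MonotoneOn A (Ioc 0 1) := by
    refine monotoneOn_of_hasDerivWithinAt_nonneg (convex_Ioc 0 1)
      (f' := fun t => (ψ' t * t - (ψ t - ψ 0) * 1) / t ^ 2 - c)
      (fun t ht => (hA' t ht).continuousAt.continuousWithinAt) (fun t ht => ?_) (fun t ht => ?_)
    · rw [interior_Ioc] at ht
      exact (hA' t (Ioo_subset_Ioc_self ht)).hasDerivWithinAt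
    · rw [interior_Ioc] at ht
      have ht2 : 0 < t ^ 2 := pow_pos ht.1 2
      have : c ≤ (ψ' t * t - (ψ t - ψ 0) * 1) / t ^ 2 :=
        (le_div_iff₀ ht2).mpr (by linarith [hqsc t ht])
      linarith
  have hlow : ∀ t ∈ Ioo (0 : ℝ) 1, -(c * t) ≤ A 1 := fun t ht => by
    have : 0 ≤ (ψ t - ψ 0) / t := div_nonneg (sub_nonneg.mpr (hmin t ht)) ht.1.le
    have := hmono (Ioo_subset_Ioc_self ht) (right_mem_Ioc.mpr one_pos) ht.2.le
    linarith
  have hlim : Tendsto (fun t : ℝ => -(c * t)) (𝓝[>] 0) (𝓝 0) :=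
    ((continuous_const.mul continuous_id).neg.tendsto' 0 0 (by simp)).mono_left
      nhdsWithin_le_nhds
  have : 0 ≤ A 1 := le_of_tendsto hlim <|
    (eventually_mem_nhdsWithin.and (Ioo_mem_nhdsGT one_pos)).mono fun t ht => hlow t ht.2
  simpa [hA] using this

section InnerProductSpace

variable {E : Type*} [NormedAddCommGroup E] [InnerProductSpace ℝ E] [CompleteSpace E]

theorem HasGradientAt.hasDerivAt_comp_add_smul {F : E → ℝ} {F' x v : E} {t : ℝ}
    (h : HasGradientAt F F' (x + t • v)) :
    HasDerivAt (fun s : ℝ => F (x + s • v)) ⟪F', v⟫ t := by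
  have hline : HasDerivAt (fun s : ℝ => x + s • v) v t := by
    simpa using ((hasDerivAt_id t).smul_const v).const_add x
  simpa [Function.comp_def] using
    (hasGradientAt_iff_hasFDerivAt.mp h).comp_hasDerivAt t hline

theorem HasGradientAt.const_mul_sum {ι : Type*} {s : Finset ι} {f : ι → E → ℝ} {f' : ι → E}
    {x : E} (c : ℝ) (h : ∀ i ∈ s, HasGradientAt (f i) (f' i) x) :
    HasGradientAt (fun y => c * ∑ i ∈ s, f i y) (c • ∑ i ∈ s, f' i) x := by
  rw [hasGradientAt_iff_hasFDerivAt, map_smul, map_sum]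
  exact (HasFDerivAt.fun_sum fun i hi => hasGradientAt_iff_hasFDerivAt.mp (h i hi)).const_mul c

theorem quadratic_growth_of_strongQuasiConvex {F : E → ℝ} {F' : E → E} {μ : ℝ} {xstar : E}
    (hF : ∀ y, HasGradientAt F (F' y) y) (hmin : ∀ y, F xstar ≤ F y)
    (hqsc : ∀ y, F y + ⟪F' y, xstar - y⟫ + μ / 2 * ‖y - xstar‖ ^ 2 ≤ F xstar) (x : E) :
    μ / 2 * ‖x - xstar‖ ^ 2 ≤ F x - F xstar := by
  set v := x - xstar
  have key := le_sub_of_sub_mul_deriv_add_sq_le (ψ := fun t => F (xstar + t • v))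
    (ψ' := fun t => ⟪F' (xstar + t • v), v⟫) (c := μ / 2 * ‖v‖ ^ 2)
    (fun t _ => (hF _).hasDerivAt_comp_add_smul) (fun t _ => by simpa using hmin _) (fun t _ => ?_)
  · simpa [v] using key
  have h := hqsc (xstar + t • v)
  rw [show xstar - (xstar + t • v) = -(t • v) by abel, inner_neg_right, real_inner_smul_right,
    add_sub_cancel_left, norm_smul, mul_pow, Real.norm_eq_abs, sq_abs] at h
  simp only [zero_smul, add_zero]
  linarith

end InnerProductSpace

theorem mean_sq_norm_le {ι E : Type*} [Fintype ι] [SeminormedAddCommGroup E] (a b : ι → E)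
    {r : ℝ} (h : ∀ i, ‖a i - b i‖ ≤ r) :
    (1 / Fintype.card ι : ℝ) * ∑ i, ‖a i‖ ^ 2
      ≤ 2 * r ^ 2 + (2 / Fintype.card ι : ℝ) * ∑ i, ‖b i‖ ^ 2 := by
  have hpoint : ∀ i, ‖a i‖ ^ 2 ≤ 2 * r ^ 2 + 2 * ‖b i‖ ^ 2 := fun i => calc
    ‖a i‖ ^ 2 ≤ (‖a i - b i‖ + ‖b i‖) ^ 2 :=
      pow_le_pow_left₀ (norm_nonneg _) (norm_le_norm_sub_add _ _) 2
    _ ≤ 2 * (‖a i - b i‖ ^ 2 + ‖b i‖ ^ 2) := add_sq_le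
    _ ≤ 2 * r ^ 2 + 2 * ‖b i‖ ^ 2 := by
      nlinarith [pow_le_pow_left₀ (norm_nonneg _) (h i) 2]
  have hsum : ∑ i, ‖a i‖ ^ 2 ≤ Fintype.card ι * (2 * r ^ 2) + 2 * ∑ i, ‖b i‖ ^ 2 := by
    refine (Finset.sum_le_sum fun i _ => hpoint i).trans_eq ?_
    simp [Finset.sum_add_distrib, Finset.mul_sum]
  have hcard : (1 / Fintype.card ι : ℝ) * Fintype.card ι ≤ 1 := by
    simpa only [one_div] using inv_mul_le_one
  calc (1 / Fintype.card ι : ℝ) * ∑ i, ‖a i‖ ^ 2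
      ≤ (1 / Fintype.card ι : ℝ) * Fintype.card ι * (2 * r ^ 2)
        + (2 / Fintype.card ι : ℝ) * ∑ i, ‖b i‖ ^ 2 := by
        refine (mul_le_mul_of_nonneg_left hsum (by positivity)).trans_eq ?_
        ring
    _ ≤ 2 * r ^ 2 + (2 / Fintype.card ι : ℝ) * ∑ i, ‖b i‖ ^ 2 := by
        have := mul_le_mul_of_nonneg_right hcard (by positivity : (0 : ℝ) ≤ 2 * r ^ 2)
        linarith

theorem avg_grad_norm_sq_bound_quasi_strong_general (d n : ℕ) (L μ : ℝ)
    (hμ : 0 < μ)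
    (f : Fin n → EuclideanSpace ℝ (Fin d) → ℝ)
    (g : Fin n → EuclideanSpace ℝ (Fin d) → EuclideanSpace ℝ (Fin d))
    (hgrad : ∀ i x, HasGradientAt (f i) (g i x) x)
    (hlip : ∀ i x y, ‖g i x - g i y‖ ≤ L * ‖x - y‖)
    (xstar : EuclideanSpace ℝ (Fin d))
    (hmin : ∀ y, (1 / n : ℝ) * ∑ i, f i xstar ≤ (1 / n : ℝ) * ∑ i, f i y)
    (hqsc : ∀ y, (1 / n : ℝ) * ∑ i, f i y
        + ⟪(1 / n : ℝ) • ∑ i, g i y, xstar - y⟫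
        + μ / 2 * ‖y - xstar‖ ^ 2 ≤ (1 / n : ℝ) * ∑ i, f i xstar)
    (x : EuclideanSpace ℝ (Fin d)) :
    (1 / n : ℝ) * ∑ i, ‖g i x‖ ^ 2 ≤
      4 * (L ^ 2 / μ) * ((1 / n : ℝ) * ∑ i, f i x - (1 / n : ℝ) * ∑ i, f i xstar)
        + (2 / n : ℝ) * ∑ i, ‖g i xstar‖ ^ 2 := by
  have hgrowth := quadratic_growth_of_strongQuasiConvex
    (fun y => HasGradientAt.const_mul_sum (1 / n : ℝ) fun i _ => hgrad i y) hmin hqsc x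
  have hmean := mean_sq_norm_le (fun i => g i x) (fun i => g i xstar) fun i => hlip i x xstar
  rw [Fintype.card_fin] at hmean
  have hscale : 2 * (L * ‖x - xstar‖) ^ 2 = 4 * (L ^ 2 / μ) * (μ / 2 * ‖x - xstar‖ ^ 2) := by
    field_simp
    ring
  have := mul_le_mul_of_nonneg_left hgrowth (by positivity : 0 ≤ 4 * (L ^ 2 / μ))
  linarith

theorem avg_grad_norm_sq_bound_quasi_strong (d n : ℕ) (hn : 0 < n) (L μ : ℝ)
    (hL : 0 < L) (hμ : 0 < μ)
    (f : Fin n → EuclideanSpace ℝ (Fin d) → ℝ)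
    (g : Fin n → EuclideanSpace ℝ (Fin d) → EuclideanSpace ℝ (Fin d))
    (hgrad : ∀ i x, HasGradientAt (f i) (g i x) x)
    (hlip : ∀ i x y, ‖g i x - g i y‖ ≤ L * ‖x - y‖)
    (xstar : EuclideanSpace ℝ (Fin d))
    (hmin : ∀ y, (1 / n : ℝ) * ∑ i, f i xstar ≤ (1 / n : ℝ) * ∑ i, f i y)
    (huniq : ∀ y, ((1 / n : ℝ) * ∑ i, f i y = (1 / n : ℝ) * ∑ i, f i xstar) → y = xstar)
    (hqsc : ∀ y, (1 / n : ℝ) * ∑ i, f i y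
        + ⟪(1 / n : ℝ) • ∑ i, g i y, xstar - y⟫
        + μ / 2 * ‖y - xstar‖ ^ 2 ≤ (1 / n : ℝ) * ∑ i, f i xstar)
    (x : EuclideanSpace ℝ (Fin d)) :
    (1 / n : ℝ) * ∑ i, ‖g i x‖ ^ 2 ≤
      4 * (L ^ 2 / μ) * ((1 / n : ℝ) * ∑ i, f i x - (1 / n : ℝ) * ∑ i, f i xstar)
        + (2 / n : ℝ) * ∑ i, ‖g i xstar‖ ^ 2 :=
  avg_grad_norm_sq_bound_quasi_strong_general d n L μ hμ f g hgrad hlip xstar hmin hqsc x
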